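/- Let f: 2^{[n]} → R be a monotone submodular function with f(∅) = 0, let X_1,...,X_n be independent {0,1}-valued random variables, and define Y_k = f({i ≤ k : X_i = 1}) - f({i ≤ k-1 : X_i = 1}). Then for every λ ∈ R, E[e^{λ∑_{i=1}^n Y_i}] ≤ ∏_{i=1}^n E[e^{λY_i}]. -/

import Mathlib

/-!
Encode the outcome as the random set `S = {i | X i = 1}`, whose law is a product of Bernoulli
laws, and reveal the coordinates one at a time. The partial sum
`Z_m = ∑_{j<m} Y_j = f (S ∩ [0, m)) - f ∅` is increasing in `S`, while `Y_m` is increasing in the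
coordinate `m` but, by submodularity, decreasing in the earlier ones. Flipping coordinate `m` keeps
the law a product of Bernoulli laws, leaves `Z_m` unchanged and makes `Y_m` decreasing, so Harris'
inequality (the monotone/antitone form of FKG) gives `E[e^{λ(Z_m + Y_m)}] ≤ E[e^{λZ_m}] E[e^{λY_m}]`
for either sign of `λ`; induct on `m`.
-/

open MeasureTheory ProbabilityTheory Finset Real

theorem fkg_of_monotone_of_antitone {α : Type*} [DistribLattice α] [Fintype α] {μ f g : α → ℝ}
    (hμ₀ : 0 ≤ μ) (hμ : ∀ a b, μ a * μ b ≤ μ (a ⊓ b) * μ (a ⊔ b))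
    (hf₀ : 0 ≤ f) (hf : Monotone f) (hg : Antitone g) :
    (∑ a, μ a) * ∑ a, μ a * (f a * g a) ≤ (∑ a, μ a * f a) * ∑ a, μ a * g a := by
  -- FKG for `f` and the monotone nonnegative function `M - g`
  set M := ∑ a, |g a|
  have hgM : ∀ a, g a ≤ M := fun a =>
    (le_abs_self _).trans (single_le_sum (fun b _ => abs_nonneg (g b)) (mem_univ a))
  have key := fkg f (fun a => M - g a) μ hμ₀ hf₀ (fun a => sub_nonneg.2 (hgM a)) hf
    (fun a b hab => sub_le_sub_left (hg hab) M) hμ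
  have hM : ∑ a, μ a * (f a * M) = (∑ a, μ a * f a) * M := by
    rw [sum_mul]; simp only [mul_assoc]
  simp only [mul_sub, sum_sub_distrib, hM, ← sum_mul] at key
  linarith

lemma update_one_sub_mem_Icc {ι : Type*} [DecidableEq ι] {p : ι → ℝ}
    (hp : ∀ i, p i ∈ Set.Icc 0 1)
    (k i : ι) :
    Function.update p k (1 - p k) i ∈ Set.Icc 0 1 := by
  rcases eq_or_ne i k with rfl | hik
  · obtain ⟨h0, h1⟩ := hp i
    simp only [Function.update_self, Set.mem_Icc]
    constructor <;> linarith
  · simpa [hik] using hp i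

section Bernoulli

variable {ι : Type*} [Fintype ι] [DecidableEq ι] {p : ι → ℝ}

def bernoulliWeight (p : ι → ℝ) (S : Finset ι) : ℝ :=
  ∏ i, if i ∈ S then p i else 1 - p i

def bernoulliExpect (p : ι → ℝ) (F : Finset ι → ℝ) : ℝ :=
  ∑ S, bernoulliWeight p S * F S

lemma bernoulliWeight_nonneg (hp : ∀ i, p i ∈ Set.Icc 0 1) (S : Finset ι) :
    0 ≤ bernoulliWeight p S :=
  prod_nonneg fun i _ => by split_ifs <;> linarith [(hp i).1, (hp i).2]

lemma sum_bernoulliWeight (p : ι → ℝ) : ∑ S, bernoulliWeight p S = 1 := by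
  calc ∑ S, bernoulliWeight p S = ∏ i, (p i + (1 - p i)) := by
        rw [prod_add, powerset_univ]
        refine sum_congr rfl fun S _ => ?_
        rw [bernoulliWeight, prod_ite, filter_mem_eq_inter, univ_inter, filter_not,
          filter_mem_eq_inter, univ_inter]
    _ = 1 := by simp

lemma bernoulliWeight_mul_bernoulliWeight (p : ι → ℝ) (S T : Finset ι) :
    bernoulliWeight p S * bernoulliWeight p T
      = bernoulliWeight p (S ∩ T) * bernoulliWeight p (S ∪ T) := by
  simp only [bernoulliWeight, ← prod_mul_distrib]
  refine prod_congr rfl fun i _ => ?_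
  by_cases hS : i ∈ S <;> by_cases hT : i ∈ T <;> simp [hS, hT, mul_comm]

lemma bernoulliWeight_symmDiff_singleton (p : ι → ℝ) (S : Finset ι) (k : ι) :
    bernoulliWeight (Function.update p k (1 - p k)) (symmDiff S {k}) = bernoulliWeight p S := by
  refine prod_congr rfl fun i _ => ?_
  rcases eq_or_ne i k with rfl | hik
  · by_cases hS : i ∈ S <;> simp [hS, mem_symmDiff]
  · simp [hik, mem_symmDiff]

lemma bernoulliExpect_comp_symmDiff_singleton (p : ι → ℝ) (F : Finset ι → ℝ) (k : ι) :
    bernoulliExpect (Function.update p k (1 - p k)) (fun S => F (symmDiff S {k}))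
      = bernoulliExpect p F := by
  rw [bernoulliExpect, ← Equiv.sum_comp (symmDiff_left_involutive {k}).toPerm]
  refine sum_congr rfl fun S _ => ?_
  simp only [Function.Involutive.coe_toPerm, symmDiff_symmDiff_cancel_right,
    bernoulliWeight_symmDiff_singleton]

lemma bernoulliExpect_nonneg (hp : ∀ i, p i ∈ Set.Icc 0 1) {F : Finset ι → ℝ}
    (hF : ∀ S, 0 ≤ F S) : 0 ≤ bernoulliExpect p F :=
  sum_nonneg fun S _ => mul_nonneg (bernoulliWeight_nonneg hp S) (hF S)

lemma bernoulliExpect_mul_le (hp : ∀ i, p i ∈ Set.Icc 0 1) {F G : Finset ι → ℝ}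
    (hF₀ : 0 ≤ F) (hF : Monotone F) (hG : Antitone G) :
    bernoulliExpect p (fun S => F S * G S) ≤ bernoulliExpect p F * bernoulliExpect p G := by
  have h := fkg_of_monotone_of_antitone (bernoulliWeight_nonneg hp)
    (fun S T => (bernoulliWeight_mul_bernoulliWeight p S T).le) hF₀ hF hG
  rwa [sum_bernoulliWeight, one_mul] at h

lemma bernoulliExpect_exp_add_le (hp : ∀ i, p i ∈ Set.Icc 0 1) {u v : Finset ι → ℝ}
    (hu : Monotone u) (hv : Antitone v) (lam : ℝ) :
    bernoulliExpect p (fun S => exp (lam * (u S + v S)))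
      ≤ bernoulliExpect p (fun S => exp (lam * u S))
        * bernoulliExpect p (fun S => exp (lam * v S)) := by
  simp only [mul_add, exp_add]
  rcases le_total 0 lam with hlam | hlam
  · exact bernoulliExpect_mul_le hp (fun S => (exp_pos _).le)
      (fun S T h => exp_le_exp.2 (mul_le_mul_of_nonneg_left (hu h) hlam))
      (fun S T h => exp_le_exp.2 (mul_le_mul_of_nonneg_left (hv h) hlam))
  · have h := bernoulliExpect_mul_le hp (fun S => (exp_pos _).le)
      (fun S T h => exp_le_exp.2 (mul_le_mul_of_nonpos_left (hv h) hlam))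
      (fun S T h => exp_le_exp.2 (mul_le_mul_of_nonpos_left (hu h) hlam))
    simpa only [mul_comm] using h

end Bernoulli

lemma insert_sub_le_insert_sub_of_submodular {α : Type*} [DecidableEq α] {f : Finset α → ℝ}
    (hsub : ∀ A B, f (A ∪ B) + f (A ∩ B) ≤ f A + f B) {A B : Finset α} (hAB : A ⊆ B) {k : α}
    (hk : k ∉ B) : f (insert k B) - f B ≤ f (insert k A) - f A := by
  have h := hsub (insert k A) B
  rw [insert_union, union_eq_right.2 hAB, insert_inter_of_notMem hk, inter_eq_left.2 hAB] at h
  linarith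

section Reveal

variable {n : ℕ} {f : Finset (Fin n) → ℝ}

def revealed (m : ℕ) (S : Finset (Fin n)) : Finset (Fin n) :=
  S.filter fun i => (i : ℕ) < m

def increment (f : Finset (Fin n) → ℝ) (j : ℕ) (S : Finset (Fin n)) : ℝ :=
  f (revealed (j + 1) S) - f (revealed j S)

lemma revealed_mono (m : ℕ) : Monotone (revealed (n := n) m) :=
  fun _ _ h => filter_subset_filter _ h

lemma revealed_symmDiff_singleton_of_le {m : ℕ} {k : Fin n} (hmk : m ≤ k) (S : Finset (Fin n)) :
    revealed m (symmDiff S {k}) = revealed m S := by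
  ext i
  by_cases him : (i : ℕ) < m
  · have hik : i ≠ k := by rintro rfl; omega
    simp [revealed, mem_symmDiff, him, hik]
  · simp [revealed, him]

lemma revealed_succ_symmDiff_singleton (k : Fin n) (S : Finset (Fin n)) :
    revealed (k + 1) (symmDiff S {k})
      = if k ∈ S then revealed k S else insert k (revealed k S) := by
  ext i
  rcases eq_or_ne i k with rfl | hik
  · by_cases hS : i ∈ S <;> simp [revealed, hS, mem_symmDiff]
  · have : (i : ℕ) ≠ k := Fin.val_ne_of_ne hik
    split_ifs <;> simp [revealed, mem_symmDiff, hik] <;> omega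

lemma sum_range_increment (m : ℕ) (S : Finset (Fin n)) :
    ∑ j ∈ range m, increment f j S = f (revealed m S) - f ∅ := by
  simp only [increment]
  rw [sum_range_sub (fun j => f (revealed j S))]
  simp [revealed]

lemma antitone_increment_symmDiff_singleton (hmono : ∀ S T, S ⊆ T → f S ≤ f T)
    (hsub : ∀ A B, f (A ∪ B) + f (A ∩ B) ≤ f A + f B) (k : Fin n) :
    Antitone fun S => increment f k (symmDiff S {k}) := by
  intro S T hST
  simp only [increment, revealed_succ_symmDiff_singleton,
    revealed_symmDiff_singleton_of_le le_rfl]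
  have hkT : k ∉ revealed k T := by simp [revealed]
  by_cases hT : k ∈ T
  · have hgain : 0 ≤ f (insert k (revealed k S)) - f (revealed k S) :=
      sub_nonneg.2 (hmono _ _ (subset_insert _ _))
    split_ifs <;> simp [hgain]
  · have hS : k ∉ S := fun h => hT (hST h)
    simp only [hS, hT, if_false]
    exact insert_sub_le_insert_sub_of_submodular hsub (revealed_mono k hST) hkT

theorem bernoulliExpect_exp_sum_increment_le {p : Fin n → ℝ} (hp : ∀ i, p i ∈ Set.Icc 0 1)
    (hmono : ∀ S T, S ⊆ T → f S ≤ f T)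
    (hsub : ∀ A B, f (A ∪ B) + f (A ∩ B) ≤ f A + f B) (lam : ℝ) {m : ℕ} (hm : m ≤ n) :
    bernoulliExpect p (fun S => exp (lam * ∑ j ∈ range m, increment f j S))
      ≤ ∏ j ∈ range m, bernoulliExpect p (fun S => exp (lam * increment f j S)) := by
  induction m with
  | zero => simp [bernoulliExpect, sum_bernoulliWeight]
  | succ m ih =>
    set k : Fin n := ⟨m, hm⟩
    set p' := Function.update p k (1 - p k)
    have hu : Monotone fun S => ∑ j ∈ range m, increment f j (symmDiff S {k}) := by
      intro S T hST
      simp only [sum_range_increment, revealed_symmDiff_singleton_of_le (m := m) (k := k) le_rfl]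
      exact sub_le_sub_right (hmono _ _ (revealed_mono m hST)) _
    have hv := antitone_increment_symmDiff_singleton hmono hsub k
    calc bernoulliExpect p (fun S => exp (lam * ∑ j ∈ range (m + 1), increment f j S))
        = bernoulliExpect p' (fun S => exp (lam *
            (∑ j ∈ range m, increment f j (symmDiff S {k}) + increment f k (symmDiff S {k})))) := by
          rw [← bernoulliExpect_comp_symmDiff_singleton p _ k]
          simp only [sum_range_succ]
          rfl
      _ ≤ bernoulliExpect p' (fun S => exp (lam * ∑ j ∈ range m, increment f j (symmDiff S {k})))
          * bernoulliExpect p' (fun S => exp (lam * increment f k (symmDiff S {k}))) :=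
          bernoulliExpect_exp_add_le (update_one_sub_mem_Icc hp k) hu hv lam
      _ = bernoulliExpect p (fun S => exp (lam * ∑ j ∈ range m, increment f j S))
          * bernoulliExpect p (fun S => exp (lam * increment f m S)) := by
          rw [← bernoulliExpect_comp_symmDiff_singleton p _ k,
            ← bernoulliExpect_comp_symmDiff_singleton p _ k]
      _ ≤ ∏ j ∈ range (m + 1), bernoulliExpect p (fun S => exp (lam * increment f j S)) := by
          rw [prod_range_succ]
          exact mul_le_mul_of_nonneg_right (ih (by omega))
            (bernoulliExpect_nonneg hp fun S => (exp_pos _).le)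

end Reveal

section Probability

variable {Ω ι : Type*} [Fintype ι] [DecidableEq ι] {X : ι → Ω → ℝ}

lemma preimage_filter_eq_one (h01 : ∀ i ω, X i ω = 0 ∨ X i ω = 1) (S : Finset ι) :
    (fun ω => univ.filter fun i => X i ω = 1) ⁻¹' {S}
      = ⋂ i, X i ⁻¹' {if i ∈ S then 1 else 0} := by
  ext ω
  simp only [Set.mem_preimage, Set.mem_singleton_iff, Set.mem_iInter, Finset.ext_iff,
    mem_filter, mem_univ, true_and]
  refine forall_congr' fun i => ?_
  rcases h01 i ω with h | h <;> by_cases hi : i ∈ S <;> simp [h, hi]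

variable [MeasurableSpace Ω] {P : Measure Ω}

lemma integral_comp_eq_sum_measureReal_preimage [IsFiniteMeasure P] {β : Type*} [Fintype β]
    {σ : Ω → β} (hσ : ∀ b, MeasurableSet (σ ⁻¹' {b})) (u : β → ℝ) :
    ∫ ω, u (σ ω) ∂P = ∑ b, P.real (σ ⁻¹' {b}) * u b := by
  classical
  have hsum : ∀ ω, u (σ ω) = ∑ b, (σ ⁻¹' {b}).indicator (fun _ => u b) ω := fun ω => by
    simp [Set.indicator_apply]
  simp_rw [hsum]
  rw [integral_finsetSum _ fun b _ => (integrable_const (u b)).indicator (hσ b)]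
  simp only [integral_indicator_const _ (hσ _), smul_eq_mul]

variable [IsProbabilityMeasure P]

lemma measureReal_preimage_filter_eq_one (hmeas : ∀ i, Measurable (X i))
    (h01 : ∀ i ω, X i ω = 0 ∨ X i ω = 1) (hindep : iIndepFun X P) (S : Finset ι) :
    P.real ((fun ω => univ.filter fun i => X i ω = 1) ⁻¹' {S})
      = bernoulliWeight (fun i => P.real (X i ⁻¹' {1})) S := by
  have hzero : ∀ i, X i ⁻¹' {0} = (X i ⁻¹' {1})ᶜ := by
    intro i
    ext ω
    rcases h01 i ω with h | h <;> simp [h]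
  rw [preimage_filter_eq_one h01, measureReal_def,
    hindep.meas_iInter fun i => ⟨_, measurableSet_singleton _, rfl⟩, ENNReal.toReal_prod]
  refine prod_congr rfl fun i _ => ?_
  split_ifs
  · rfl
  · rw [hzero, ← measureReal_def, probReal_compl_eq_one_sub (hmeas i (measurableSet_singleton _))]

lemma integral_comp_filter_eq_one (hmeas : ∀ i, Measurable (X i))
    (h01 : ∀ i ω, X i ω = 0 ∨ X i ω = 1) (hindep : iIndepFun X P) (u : Finset ι → ℝ) :
    ∫ ω, u (univ.filter fun i => X i ω = 1) ∂P
      = bernoulliExpect (fun i => P.real (X i ⁻¹' {1})) u := by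
  have hfib (S : Finset ι) :
      MeasurableSet ((fun ω => univ.filter fun i => X i ω = 1) ⁻¹' {S}) := by
    rw [preimage_filter_eq_one h01]
    exact MeasurableSet.iInter fun i => hmeas i (measurableSet_singleton _)
  rw [integral_comp_eq_sum_measureReal_preimage hfib]
  simp only [measureReal_preimage_filter_eq_one hmeas h01 hindep, bernoulliExpect]

end Probability

theorem stmt_7_general {Ω : Type*} [MeasurableSpace Ω] (P : Measure Ω) [IsProbabilityMeasure P]
    {n : ℕ} (f : Finset (Fin n) → ℝ)
    (hmono : ∀ S T, S ⊆ T → f S ≤ f T)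
    (hsub : ∀ A B, f (A ∪ B) + f (A ∩ B) ≤ f A + f B)
    (X : Fin n → Ω → ℝ)
    (hmeas : ∀ i, Measurable (X i))
    (h01 : ∀ i ω, X i ω = 0 ∨ X i ω = 1)
    (hindep : iIndepFun X P)
    (Y : Fin n → Ω → ℝ)
    (hY : ∀ k ω, Y k ω =
      f (Finset.univ.filter fun i => i ≤ k ∧ X i ω = 1)
        - f (Finset.univ.filter fun i => i < k ∧ X i ω = 1))
    (lam : ℝ) :
    ∫ ω, Real.exp (lam * ∑ k, Y k ω) ∂P
      ≤ ∏ k, ∫ ω, Real.exp (lam * Y k ω) ∂P := by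
  set p : Fin n → ℝ := fun i => P.real (X i ⁻¹' {1})
  have hYinc : ∀ k ω, Y k ω = increment f k (univ.filter fun i => X i ω = 1) := by
    intro k ω
    rw [hY, increment]
    congr 2 <;> ext i <;> simp [revealed, and_comm]
  have hsum : ∀ ω, ∑ k, Y k ω = ∑ j ∈ range n, increment f j (univ.filter fun i => X i ω = 1) :=
    fun ω => by simp only [hYinc]; exact Fin.sum_univ_eq_sum_range (increment f · _) n
  calc ∫ ω, exp (lam * ∑ k, Y k ω) ∂P
      = bernoulliExpect p (fun S => exp (lam * ∑ j ∈ range n, increment f j S)) := by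
        simp_rw [hsum]
        exact integral_comp_filter_eq_one hmeas h01 hindep
          (fun S => exp (lam * ∑ j ∈ range n, increment f j S))
    _ ≤ ∏ j ∈ range n, bernoulliExpect p (fun S => exp (lam * increment f j S)) :=
        bernoulliExpect_exp_sum_increment_le (fun i => ⟨measureReal_nonneg, measureReal_le_one⟩)
          hmono hsub lam le_rfl
    _ = ∏ k, ∫ ω, exp (lam * Y k ω) ∂P := by
        rw [← Fin.prod_univ_eq_prod_range]
        refine prod_congr rfl fun k _ => ?_
        simp_rw [hYinc]
        exact (integral_comp_filter_eq_one hmeas h01 hindep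
          (fun S => exp (lam * increment f k S))).symm

theorem stmt_7 {Ω : Type*} [MeasurableSpace Ω] (P : Measure Ω) [IsProbabilityMeasure P]
    {n : ℕ} (f : Finset (Fin n) → ℝ)
    (hempty : f ∅ = 0)
    (hmono : ∀ S T, S ⊆ T → f S ≤ f T)
    (hsub : ∀ A B, f (A ∪ B) + f (A ∩ B) ≤ f A + f B)
    (X : Fin n → Ω → ℝ)
    (hmeas : ∀ i, Measurable (X i))
    (h01 : ∀ i ω, X i ω = 0 ∨ X i ω = 1)
    (hindep : iIndepFun X P)
    (Y : Fin n → Ω → ℝ)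
    (hY : ∀ k ω, Y k ω =
      f (Finset.univ.filter fun i => i ≤ k ∧ X i ω = 1)
        - f (Finset.univ.filter fun i => i < k ∧ X i ω = 1))
    (lam : ℝ) :
    ∫ ω, Real.exp (lam * ∑ k, Y k ω) ∂P
      ≤ ∏ k, ∫ ω, Real.exp (lam * Y k ω) ∂P :=
  stmt_7_general P f hmono hsub X hmeas h01 hindep Y hY lam
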